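/- For p ∈ [1,∞) and u ∈ L^p(ℝ^N), with E_t = {(x,y) : x ≠ y, |u(x)-u(y)|^p ≥ t^p|x-y|^N}, one has 2ω_N‖u‖_p^p ≤ sup_{t>0} t^p·|E_t|_{2N} ≤ 2^{p+1}ω_N‖u‖_p^p. -/

import Mathlib

/-!
Upper bound: `|u x - u y| ≤ 2 max (|u x|, |u y|)`, so `E_t = jumpSet N u p t` is covered by the set
`{t^p |x - y|^N ≤ 2^p |u x|^p}` and its reflection. The `x`-slices of that set are balls, so by
Tonelli it has measure `2^p ω_N ‖u‖_p^p / t^p`.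

Lower bound: fix `θ < 1`. The pairs with `|u y| < (1 - θ) |u x|` and `t^p |x - y|^N ≤ θ^p |u x|^p`
(`dropSet`) lie in `E_t`, and they are disjoint from their reflections, which also lie in `E_t`.
For a fixed `x` with `u x ≠ 0`, the slice covers the ball of measure `θ^p |u x|^p ω_N / t^p` up to
a set of finite measure (Chebyshev). So Fatou's lemma as `t → 0` gives
`2 θ^p ω_N ‖u‖_p^p ≤ sup_t t^p |E_t|`, and then we let `θ → 1`.
-/

open MeasureTheory Metric Set Filter Topology Module

section Sets

variable {E : Type*} [PseudoMetricSpace E]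

def jumpSet (N : ℕ) (u : E → ℝ) (p t : ℝ) : Set (E × E) :=
  {q | q.1 ≠ q.2 ∧ t ^ p * dist q.1 q.2 ^ N ≤ |u q.1 - u q.2| ^ p}

def dropSet (N : ℕ) (u : E → ℝ) (p θ s : ℝ) : Set (E × E) :=
  {q | |u q.2| < (1 - θ) * |u q.1| ∧ s * dist q.1 q.2 ^ N ≤ θ ^ p * |u q.1| ^ p}

theorem swap_preimage_jumpSet (N : ℕ) (u : E → ℝ) (p t : ℝ) :
    Prod.swap ⁻¹' jumpSet N u p t = jumpSet N u p t := by
  ext ⟨x, y⟩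
  simp only [jumpSet, mem_preimage, Prod.fst_swap, Prod.snd_swap, mem_ofPred_eq, ne_comm,
    dist_comm y x, abs_sub_comm (u y)]

theorem abs_lt_of_mem_dropSet {N : ℕ} {u : E → ℝ} {p θ s : ℝ} (hθ : 0 ≤ θ) {q : E × E}
    (hq : q ∈ dropSet N u p θ s) : |u q.2| < |u q.1| :=
  hq.1.trans_le <| by nlinarith [abs_nonneg (u q.1)]

theorem dropSet_subset_jumpSet {N : ℕ} {u : E → ℝ} {p θ : ℝ} (hp : 0 ≤ p) (hθ : 0 ≤ θ) (t : ℝ) :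
    dropSet N u p θ (t ^ p) ⊆ jumpSet N u p t := by
  rintro ⟨x, y⟩ hq
  have hlt : |u y| < |u x| := abs_lt_of_mem_dropSet hθ hq
  refine ⟨fun hxy => hlt.ne' (congrArg (fun z => |u z|) hxy), hq.2.trans ?_⟩
  rw [← Real.mul_rpow hθ (abs_nonneg _)]
  have hdrop : |u y| < (1 - θ) * |u x| := hq.1
  exact Real.rpow_le_rpow (by positivity)
    (by linarith [abs_sub_abs_le_abs_sub (u x) (u y)]) hp

variable [MeasurableSpace E] [OpensMeasurableSpace (E × E)]

theorem measurableSet_dropSet (N : ℕ) {u : E → ℝ} (hu : Measurable u) (p θ s : ℝ) :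
    MeasurableSet (dropSet N u p θ s) :=
  (measurableSet_lt (f := fun q : E × E => |u q.2|) (by fun_prop) (by fun_prop)).inter
    (measurableSet_le (f := fun q : E × E => s * dist q.1 q.2 ^ N) (by fun_prop) (by fun_prop))

theorem two_mul_prod_dropSet_le_prod_jumpSet (μ : Measure E) [SFinite μ] (N : ℕ) {u : E → ℝ}
    (hu : Measurable u) {p θ : ℝ} (hp : 0 ≤ p) (hθ : 0 ≤ θ) (t : ℝ) :
    2 * (μ.prod μ) (dropSet N u p θ (t ^ p)) ≤ (μ.prod μ) (jumpSet N u p t) := by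
  set A := dropSet N u p θ (t ^ p)
  have hA : MeasurableSet A := measurableSet_dropSet N hu p θ _
  have hdisj : Disjoint A (Prod.swap ⁻¹' A) := disjoint_left.2 fun q hq hq' =>
    (abs_lt_of_mem_dropSet hθ hq).not_gt (abs_lt_of_mem_dropSet hθ hq')
  have hswap : Prod.swap ⁻¹' A ⊆ jumpSet N u p t := by
    rw [← swap_preimage_jumpSet]
    exact preimage_mono (dropSet_subset_jumpSet hp hθ t)
  calc 2 * (μ.prod μ) A = (μ.prod μ) A + (μ.prod μ) (Prod.swap ⁻¹' A) := by
        rw [two_mul, Measure.measurePreserving_swap.measure_preimage hA.nullMeasurableSet]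
    _ = (μ.prod μ) (A ∪ Prod.swap ⁻¹' A) :=
        (measure_union hdisj (hA.preimage measurable_swap)).symm
    _ ≤ (μ.prod μ) (jumpSet N u p t) :=
        measure_mono (union_subset (dropSet_subset_jumpSet hp hθ t) hswap)

end Sets

theorem abs_sub_rpow_le_two_rpow_mul_or (a b : ℝ) {p : ℝ} (hp : 0 ≤ p) :
    |a - b| ^ p ≤ 2 ^ p * |a| ^ p ∨ |a - b| ^ p ≤ 2 ^ p * |b| ^ p := by
  have key : ∀ c, |a - b| ≤ 2 * |c| → |a - b| ^ p ≤ 2 ^ p * |c| ^ p := fun c h =>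
    (Real.rpow_le_rpow (abs_nonneg _) h hp).trans_eq (Real.mul_rpow zero_le_two (abs_nonneg c))
  rcases le_total |a| |b| with h | h
  · exact Or.inr (key b (by linarith [abs_sub a b]))
  · exact Or.inl (key a (by linarith [abs_sub a b]))

theorem measure_setOf_le_abs_lt_top {α : Type*} [MeasurableSpace α] {μ : Measure α} {u : α → ℝ}
    (hu : Measurable u) {p : ℝ} (hp : 0 < p) (hfin : ∫⁻ x, ENNReal.ofReal (|u x| ^ p) ∂μ < ⊤)
    {c : ℝ} (hc : 0 < c) : μ {x | c ≤ |u x|} < ⊤ :=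
  calc μ {x | c ≤ |u x|} ≤ μ {x | ENNReal.ofReal (c ^ p) ≤ ENNReal.ofReal (|u x| ^ p)} :=
        measure_mono fun x hx => ENNReal.ofReal_le_ofReal (Real.rpow_le_rpow hc.le hx hp.le)
    _ ≤ (∫⁻ x, ENNReal.ofReal (|u x| ^ p) ∂μ) / ENNReal.ofReal (c ^ p) :=
        meas_ge_le_lintegral_div (by fun_prop)
          (ENNReal.ofReal_pos.2 (Real.rpow_pos_of_pos hc p)).ne' ENNReal.ofReal_ne_top
    _ < ⊤ := ENNReal.div_lt_top hfin.ne (ENNReal.ofReal_pos.2 (Real.rpow_pos_of_pos hc p)).ne'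

section Haar

variable {E : Type*} [NormedAddCommGroup E] [NormedSpace ℝ E] [FiniteDimensional ℝ E]
  [MeasurableSpace E] [BorelSpace E] (μ : Measure E) [μ.IsAddHaarMeasure] {N : ℕ}

theorem ofReal_mul_addHaar_setOf_mul_dist_pow_le (hN : finrank ℝ E = N) (hN0 : 0 < N) (x : E)
    {s c : ℝ} (hs : 0 < s) (hc : 0 ≤ c) :
    ENNReal.ofReal s * μ {y | s * dist x y ^ N ≤ c} = ENNReal.ofReal c * μ (ball 0 1) := by
  have hcs : 0 ≤ c / s := div_nonneg hc hs.le
  have hball : {y | s * dist x y ^ N ≤ c} = closedBall x ((c / s) ^ (N : ℝ)⁻¹) := by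
    ext y
    rw [mem_ofPred_eq, mem_closedBall, dist_comm,
      Real.le_rpow_inv_iff_of_pos dist_nonneg hcs (by exact_mod_cast hN0), Real.rpow_natCast,
      le_div_iff₀ hs, mul_comm]
  rw [hball, Measure.addHaar_closedBall _ _ (Real.rpow_nonneg hcs _), hN,
    Real.rpow_inv_natCast_pow hcs hN0.ne', ← mul_assoc, ← ENNReal.ofReal_mul hs.le,
    mul_div_cancel₀ _ hs.ne']

theorem ofReal_mul_prod_setOf_mul_dist_pow_le (hN : finrank ℝ E = N) (hN0 : 0 < N) {g : E → ℝ}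
    (hg : Measurable g) (hg0 : ∀ x, 0 ≤ g x) {s : ℝ} (hs : 0 < s) :
    ENNReal.ofReal s * (μ.prod μ) {q | s * dist q.1 q.2 ^ N ≤ g q.1} =
      μ (ball 0 1) * ∫⁻ x, ENNReal.ofReal (g x) ∂μ := by
  rw [Measure.prod_apply (measurableSet_le (by fun_prop) (by fun_prop)),
    ← lintegral_const_mul' _ _ ENNReal.ofReal_ne_top,
    ← lintegral_const_mul' _ _ measure_ball_lt_top.ne]
  refine lintegral_congr fun x => ?_
  rw [mul_comm (μ _)]
  exact ofReal_mul_addHaar_setOf_mul_dist_pow_le μ hN hN0 x hs (hg0 x)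

theorem iSup_ofReal_mul_prod_jumpSet_le (hN : finrank ℝ E = N) (hN0 : 0 < N) {p : ℝ} (hp : 0 ≤ p)
    {u : E → ℝ} (hu : Measurable u) :
    ⨆ t ∈ Ioi (0 : ℝ), ENNReal.ofReal (t ^ p) * (μ.prod μ) (jumpSet N u p t) ≤
      ENNReal.ofReal (2 ^ (p + 1)) * μ (ball 0 1) * ∫⁻ x, ENNReal.ofReal (|u x| ^ p) ∂μ := by
  refine iSup₂_le fun t ht => ?_
  set A := {q : E × E | t ^ p * dist q.1 q.2 ^ N ≤ 2 ^ p * |u q.1| ^ p}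
  have hcover : jumpSet N u p t ⊆ A ∪ Prod.swap ⁻¹' A := by
    rintro ⟨x, y⟩ ⟨-, hxy⟩
    rcases abs_sub_rpow_le_two_rpow_mul_or (u x) (u y) hp with h | h
    · exact Or.inl (hxy.trans h)
    · refine Or.inr (show t ^ p * dist y x ^ N ≤ 2 ^ p * |u y| ^ p from ?_)
      rw [dist_comm]
      exact hxy.trans h
  have hswap : (μ.prod μ) (Prod.swap ⁻¹' A) = (μ.prod μ) A :=
    Measure.measurePreserving_swap.measure_preimage
      (measurableSet_le (by fun_prop) (by fun_prop)).nullMeasurableSet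
  have hA := ofReal_mul_prod_setOf_mul_dist_pow_le μ hN hN0 (g := fun x => 2 ^ p * |u x| ^ p)
    (by fun_prop) (fun x => by positivity) (Real.rpow_pos_of_pos ht p)
  simp only [ENNReal.ofReal_mul (Real.rpow_nonneg zero_le_two p)] at hA
  calc ENNReal.ofReal (t ^ p) * (μ.prod μ) (jumpSet N u p t)
      ≤ ENNReal.ofReal (t ^ p) * ((μ.prod μ) A + (μ.prod μ) A) := by
        gcongr
        exact (measure_mono hcover).trans ((measure_union_le _ _).trans_eq (by rw [hswap]))
    _ = 2 * (ENNReal.ofReal (t ^ p) * (μ.prod μ) A) := by ring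
    _ = ENNReal.ofReal (2 ^ (p + 1)) * μ (ball 0 1) * ∫⁻ x, ENNReal.ofReal (|u x| ^ p) ∂μ := by
        rw [hA, lintegral_const_mul' _ _ ENNReal.ofReal_ne_top, Real.rpow_add_one two_ne_zero,
          ENNReal.ofReal_mul (Real.rpow_nonneg zero_le_two p), ENNReal.ofReal_ofNat]
        ring

theorem le_liminf_ofReal_mul_measure_dropSet_slice (hN : finrank ℝ E = N) (hN0 : 0 < N)
    {u : E → ℝ} (hu : Measurable u) {p : ℝ} (hp : 0 < p)
    (hfin : ∫⁻ x, ENNReal.ofReal (|u x| ^ p) ∂μ < ⊤) {θ : ℝ} (hθ0 : 0 ≤ θ) (hθ1 : θ < 1)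
    {s : ℕ → ℝ} (hs : ∀ n, 0 < s n) (hs0 : Tendsto s atTop (𝓝 0)) (x : E) :
    ENNReal.ofReal (θ ^ p * |u x| ^ p) * μ (ball 0 1) ≤
      liminf (fun n => ENNReal.ofReal (s n) * μ (Prod.mk x ⁻¹' dropSet N u p θ (s n))) atTop := by
  rcases eq_or_ne (u x) 0 with hx | hx
  · simp [hx, Real.zero_rpow hp.ne']
  set m := μ {y | (1 - θ) * |u x| ≤ |u y|}
  have hm : m ≠ ⊤ := (measure_setOf_le_abs_lt_top hu hp hfin
    (mul_pos (sub_pos.2 hθ1) (abs_pos.2 hx))).ne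
  have hbound : ∀ n, ENNReal.ofReal (θ ^ p * |u x| ^ p) * μ (ball 0 1) ≤
      ENNReal.ofReal (s n) * μ (Prod.mk x ⁻¹' dropSet N u p θ (s n)) +
        ENNReal.ofReal (s n) * m := by
    intro n
    rw [← ofReal_mul_addHaar_setOf_mul_dist_pow_le μ hN hN0 x (hs n) (by positivity), ← mul_add]
    gcongr
    refine (measure_mono fun y hy => ?_).trans (measure_union_le _ _)
    rcases lt_or_ge |u y| ((1 - θ) * |u x|) with h | h
    exacts [Or.inl ⟨h, hy⟩, Or.inr h]
  have hvanish : Tendsto (fun n => ENNReal.ofReal (s n) * m) atTop (𝓝 0) := by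
    simpa using ENNReal.Tendsto.mul_const (ENNReal.tendsto_ofReal hs0) (Or.inr hm)
  calc ENNReal.ofReal (θ ^ p * |u x| ^ p) * μ (ball 0 1)
      ≤ liminf (fun n => ENNReal.ofReal (s n) * μ (Prod.mk x ⁻¹' dropSet N u p θ (s n)) +
          ENNReal.ofReal (s n) * m) atTop :=
        le_liminf_of_le (by isBoundedDefault) (Eventually.of_forall hbound)
    _ = _ := ENNReal.liminf_add_of_right_tendsto_zero hvanish _

theorem ofReal_rpow_mul_le_iSup_ofReal_mul_prod_jumpSet (hN : finrank ℝ E = N) (hN0 : 0 < N)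
    {u : E → ℝ} (hu : Measurable u) {p : ℝ} (hp : 0 < p)
    (hfin : ∫⁻ x, ENNReal.ofReal (|u x| ^ p) ∂μ < ⊤) {θ : ℝ} (hθ0 : 0 ≤ θ) (hθ1 : θ < 1) :
    ENNReal.ofReal (θ ^ p) * (2 * μ (ball 0 1) * ∫⁻ x, ENNReal.ofReal (|u x| ^ p) ∂μ) ≤
      ⨆ t ∈ Ioi (0 : ℝ), ENNReal.ofReal (t ^ p) * (μ.prod μ) (jumpSet N u p t) := by
  set L := ⨆ t ∈ Ioi (0 : ℝ), ENNReal.ofReal (t ^ p) * (μ.prod μ) (jumpSet N u p t)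
  set t : ℕ → ℝ := fun n => 1 / ((n : ℝ) + 1)
  have ht : ∀ n, 0 < t n := fun n => by positivity
  have hts : Tendsto (fun n => t n ^ p) atTop (𝓝 0) := by
    have := tendsto_one_div_add_atTop_nhds_zero_nat.rpow_const (Or.inr hp.le)
    rwa [Real.zero_rpow hp.ne'] at this
  set f : ℕ → E → ENNReal := fun n x =>
    ENNReal.ofReal (t n ^ p) * μ (Prod.mk x ⁻¹' dropSet N u p θ (t n ^ p))
  have hslice : ∀ n, Measurable fun x => μ (Prod.mk x ⁻¹' dropSet N u p θ (t n ^ p)) :=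
    fun n => measurable_measure_prodMk_left (measurableSet_dropSet N hu p θ _)
  have hfL : ∀ n, 2 * ∫⁻ x, f n x ∂μ ≤ L := fun n =>
    calc 2 * ∫⁻ x, f n x ∂μ
        = ENNReal.ofReal (t n ^ p) * (2 * (μ.prod μ) (dropSet N u p θ (t n ^ p))) := by
          rw [lintegral_const_mul _ (hslice n),
            Measure.prod_apply (measurableSet_dropSet N hu p θ _)]
          ring
      _ ≤ ENNReal.ofReal (t n ^ p) * (μ.prod μ) (jumpSet N u p (t n)) := by
          gcongr
          exact two_mul_prod_dropSet_le_prod_jumpSet μ N hu hp.le hθ0 (t n)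
      _ ≤ L := le_iSup₂ (f := fun t (_ : t ∈ Ioi (0 : ℝ)) =>
          ENNReal.ofReal (t ^ p) * (μ.prod μ) (jumpSet N u p t)) (t n) (ht n)
  calc ENNReal.ofReal (θ ^ p) * (2 * μ (ball 0 1) * ∫⁻ x, ENNReal.ofReal (|u x| ^ p) ∂μ)
      = 2 * ∫⁻ x, ENNReal.ofReal (θ ^ p * |u x| ^ p) * μ (ball 0 1) ∂μ := by
        simp only [ENNReal.ofReal_mul (Real.rpow_nonneg hθ0 p)]
        rw [lintegral_mul_const' _ _ measure_ball_lt_top.ne,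
          lintegral_const_mul' _ _ ENNReal.ofReal_ne_top]
        ring
    _ ≤ 2 * ∫⁻ x, liminf (fun n => f n x) atTop ∂μ := by
        gcongr with x
        exact le_liminf_ofReal_mul_measure_dropSet_slice μ hN hN0 hu hp hfin hθ0 hθ1
          (fun n => Real.rpow_pos_of_pos (ht n) p) hts x
    _ ≤ 2 * liminf (fun n => ∫⁻ x, f n x ∂μ) atTop := by
        gcongr
        exact lintegral_liminf_le fun n => (hslice n).const_mul _
    _ = liminf (fun n => 2 * ∫⁻ x, f n x ∂μ) atTop :=
        (ENNReal.liminf_const_mul_of_ne_top ENNReal.ofNat_ne_top).symm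
    _ ≤ L := liminf_le_of_frequently_le' (Frequently.of_forall hfL)

theorem two_mul_lintegral_le_iSup_ofReal_mul_prod_jumpSet (hN : finrank ℝ E = N) (hN0 : 0 < N)
    {u : E → ℝ} (hu : Measurable u) {p : ℝ} (hp : 0 < p)
    (hfin : ∫⁻ x, ENNReal.ofReal (|u x| ^ p) ∂μ < ⊤) :
    2 * μ (ball 0 1) * ∫⁻ x, ENNReal.ofReal (|u x| ^ p) ∂μ ≤
      ⨆ t ∈ Ioi (0 : ℝ), ENNReal.ofReal (t ^ p) * (μ.prod μ) (jumpSet N u p t) := by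
  refine ENNReal.le_of_forall_lt_one_mul_le fun a ha => ?_
  have ha_top : a ≠ ⊤ := (ha.trans ENNReal.one_lt_top).ne
  have ha_toReal : a.toReal < 1 := by
    simpa using (ENNReal.toReal_lt_toReal ha_top ENNReal.one_ne_top).2 ha
  have hθ : ENNReal.ofReal ((a.toReal ^ p⁻¹) ^ p) = a := by
    rw [← Real.rpow_mul ENNReal.toReal_nonneg, inv_mul_cancel₀ hp.ne', Real.rpow_one,
      ENNReal.ofReal_toReal ha_top]
  rw [← hθ]
  exact ofReal_rpow_mul_le_iSup_ofReal_mul_prod_jumpSet μ hN hN0 hu hp hfin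
    (Real.rpow_nonneg ENNReal.toReal_nonneg _)
    (Real.rpow_lt_one ENNReal.toReal_nonneg ha_toReal (inv_pos.2 hp))

end Haar

theorem stmt17 (N : ℕ) (hN : 0 < N) (p : ℝ) (hp : 1 ≤ p)
    (u : EuclideanSpace ℝ (Fin N) → ℝ) (hu : Measurable u)
    (hfin : ∫⁻ x, ENNReal.ofReal (|u x| ^ p) < ⊤) :
    2 * volume (ball (0 : EuclideanSpace ℝ (Fin N)) 1) *
        (∫⁻ x, ENNReal.ofReal (|u x| ^ p)) ≤
      (⨆ t ∈ Ioi (0:ℝ), ENNReal.ofReal (t ^ p) *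
        volume {q : EuclideanSpace ℝ (Fin N) × EuclideanSpace ℝ (Fin N) |
          q.1 ≠ q.2 ∧ t ^ p * dist q.1 q.2 ^ N ≤ |u q.1 - u q.2| ^ p}) ∧
    (⨆ t ∈ Ioi (0:ℝ), ENNReal.ofReal (t ^ p) *
        volume {q : EuclideanSpace ℝ (Fin N) × EuclideanSpace ℝ (Fin N) |
          q.1 ≠ q.2 ∧ t ^ p * dist q.1 q.2 ^ N ≤ |u q.1 - u q.2| ^ p}) ≤
      ENNReal.ofReal (2 ^ (p + 1)) * volume (ball (0 : EuclideanSpace ℝ (Fin N)) 1) *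
        (∫⁻ x, ENNReal.ofReal (|u x| ^ p)) :=
  ⟨two_mul_lintegral_le_iSup_ofReal_mul_prod_jumpSet volume finrank_euclideanSpace_fin hN hu
      (by linarith) hfin,
    iSup_ofReal_mul_prod_jumpSet_le volume finrank_euclideanSpace_fin hN (by linarith) hu⟩
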